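/- arXiv:2605.31165 — 10 statements merged into one kernel-verified Lean document; each statement's English description precedes it below -/
import Mathlib

section
/- For any c ≥ 0 and r > 1, the map d : ℝ^N → ℝ^N defined by d(ξ) = (c + |ξ|²)^((r-2)/2) ξ is strictly monotone, i.e. (d(ξ) - d(η)) · (ξ - η) > 0 for all ξ, η ∈ ℝ^N with ξ ≠ η. -/
open scoped RealInnerProductSpace

lemma gmono_aux (c r : ℝ) (hc : 0 ≤ c) (hr : 1 < r) {s t : ℝ} (hs : 0 ≤ s) (hst : s < t) :
    s * (c + s ^ 2) ^ ((r - 2) / 2) < t * (c + t ^ 2) ^ ((r - 2) / 2) := by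
  have ht : 0 < t := lt_of_le_of_lt hs hst
  have hct : 0 < c + t ^ 2 := by positivity
  rcases eq_or_lt_of_le hs with h0 | hs0
  · rw [← h0]
    simpa using mul_pos ht (Real.rpow_pos_of_pos hct _)
  · have hcs : 0 < c + s ^ 2 := by positivity
    have key : ∀ x : ℝ, 0 < c + x ^ 2 →
        (x * (c + x ^ 2) ^ ((r - 2) / 2)) ^ 2
          = (x ^ 2 / (c + x ^ 2)) * (c + x ^ 2) ^ (r - 1) := by
      intro x hx
      rw [mul_pow, ← Real.rpow_natCast ((c + x ^ 2) ^ ((r - 2) / 2)) 2,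
        ← Real.rpow_mul hx.le]
      rw [show (r - 2) / 2 * (2 : ℕ) = (r - 1) - 1 by push_cast; ring,
        Real.rpow_sub hx, Real.rpow_one]
      ring
    apply lt_of_pow_lt_pow_left₀ 2 (by positivity)
    rw [key s hcs, key t hct]
    have h1 : s ^ 2 / (c + s ^ 2) ≤ t ^ 2 / (c + t ^ 2) := by
      rw [div_le_div_iff₀ hcs hct]
      nlinarith [mul_le_mul_of_nonneg_left (pow_le_pow_left₀ hs hst.le 2) hc]
    have h2 : (c + s ^ 2) ^ (r - 1) < (c + t ^ 2) ^ (r - 1) :=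
      Real.rpow_lt_rpow hcs.le (by nlinarith) (by linarith)
    exact mul_lt_mul' h1 h2 (Real.rpow_nonneg hcs.le _) (by positivity)

/-- For any `c ≥ 0` and `r > 1`, the map `d(ξ) = (c + |ξ|²)^((r-2)/2) ξ` is strictly
monotone: `(d ξ - d η) ⬝ (ξ - η) > 0` whenever `ξ ≠ η`. -/
theorem stmt0 (N : ℕ) (c r : ℝ) (hc : 0 ≤ c) (hr : 1 < r)
    (ξ η : EuclideanSpace ℝ (Fin N)) (hne : ξ ≠ η) :
    0 < ⟪(c + ‖ξ‖ ^ 2) ^ ((r - 2) / 2) • ξ - (c + ‖η‖ ^ 2) ^ ((r - 2) / 2) • η, ξ - η⟫ := by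
  set a : ℝ := (c + ‖ξ‖ ^ 2) ^ ((r - 2) / 2) with ha_def
  set b : ℝ := (c + ‖η‖ ^ 2) ^ ((r - 2) / 2) with hb_def
  have expand : ⟪a • ξ - b • η, ξ - η⟫ =
      a * ‖ξ‖ ^ 2 + b * ‖η‖ ^ 2 - (a + b) * ⟪ξ, η⟫ := by
    simp only [inner_sub_left, inner_sub_right, real_inner_smul_left]
    rw [real_inner_self_eq_norm_sq, real_inner_self_eq_norm_sq, real_inner_comm η ξ]
    ring
  by_cases hnorm : ‖ξ‖ = ‖η‖
  · have hab : a = b := by rw [ha_def, hb_def, hnorm]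
    have hξ0 : ξ ≠ 0 := by
      intro h
      apply hne
      have : ‖η‖ = 0 := by rw [← hnorm, h, norm_zero]
      rw [h, norm_eq_zero.mp this]
    have ha : 0 < a := by
      have : 0 < c + ‖ξ‖ ^ 2 := by
        have : 0 < ‖ξ‖ := norm_pos_iff.mpr hξ0
        positivity
      exact Real.rpow_pos_of_pos this _
    have hsub : ξ - η ≠ 0 := sub_ne_zero.mpr hne
    have : a • ξ - b • η = a • (ξ - η) := by rw [smul_sub, hab]
    rw [this, real_inner_smul_left, real_inner_self_eq_norm_sq]
    have : 0 < ‖ξ - η‖ := norm_pos_iff.mpr hsub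
    positivity
  · have ha : 0 ≤ a := Real.rpow_nonneg (by positivity) _
    have hb : 0 ≤ b := Real.rpow_nonneg (by positivity) _
    have hCS : ⟪ξ, η⟫ ≤ ‖ξ‖ * ‖η‖ := real_inner_le_norm ξ η
    have key : (‖ξ‖ - ‖η‖) * (a * ‖ξ‖ - b * ‖η‖) ≤ ⟪a • ξ - b • η, ξ - η⟫ := by
      rw [expand]
      nlinarith [mul_le_mul_of_nonneg_left hCS (add_nonneg ha hb)]
    have hpos : 0 < (‖ξ‖ - ‖η‖) * (a * ‖ξ‖ - b * ‖η‖) := by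
      rcases lt_or_gt_of_ne hnorm with h | h
      · have := gmono_aux c r hc hr (norm_nonneg ξ) h
        rw [← ha_def, ← hb_def] at this
        have h1 : ‖ξ‖ - ‖η‖ < 0 := by linarith
        have h2 : a * ‖ξ‖ - b * ‖η‖ < 0 := by nlinarith
        exact mul_pos_of_neg_of_neg h1 h2
      · have := gmono_aux c r hc hr (norm_nonneg η) h
        rw [← ha_def, ← hb_def] at this
        have h1 : 0 < ‖ξ‖ - ‖η‖ := by linarith
        have h2 : 0 < a * ‖ξ‖ - b * ‖η‖ := by nlinarith
        exact mul_pos h1 h2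
    linarith
end

section
/- Let φ : ℝ₊ → ℝ₊ be a nonincreasing function such that φ(h) ≤ c₀ k^(θρ) φ(k)^(1+λ) / (h-k)^ρ for all h > k ≥ k₀, where c₀ > 0, k₀ ≥ 0, ρ > 0, 0 ≤ θ < 1 and λ > 0. Then there exists k* > 0 such that φ(k*) = 0. -/
private lemma pow_rpow_comm (x : ℝ) (hx : 0 ≤ x) (r : ℝ) (n : ℕ) :
    (x ^ n) ^ r = (x ^ r) ^ n := by
  rw [← Real.rpow_natCast x n, ← Real.rpow_mul hx, mul_comm, Real.rpow_mul hx,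
    Real.rpow_natCast]

set_option maxHeartbeats 1000000 in
/-- Generalized Stampacchia lemma: if `φ : ℝ₊ → ℝ₊` is nonincreasing and
`φ h ≤ c₀ k^(θρ) φ(k)^(1+λ) / (h-k)^ρ` for all `h > k ≥ k₀`, with `c₀ > 0`, `k₀ ≥ 0`,
`ρ > 0`, `0 ≤ θ < 1`, `λ > 0`, then `φ` vanishes at some `k* > 0`. -/
theorem stmt2 (φ : ℝ → ℝ) (c₀ k₀ ρ θ lam : ℝ)
    (hφ0 : ∀ t, 0 ≤ t → 0 ≤ φ t)
    (hmono : AntitoneOn φ (Set.Ici 0))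
    (hc₀ : 0 < c₀) (hk₀ : 0 ≤ k₀) (hρ : 0 < ρ) (hθ0 : 0 ≤ θ) (hθ1 : θ < 1) (hlam : 0 < lam)
    (hineq : ∀ h k : ℝ, k₀ ≤ k → k < h →
      φ h ≤ c₀ / (h - k) ^ ρ * k ^ (θ * ρ) * φ k ^ (1 + lam)) :
    ∃ kstar : ℝ, 0 < kstar ∧ φ kstar = 0 := by
  have h2 : (0:ℝ) < 2 := two_pos
  obtain ⟨m₀, hm₀def⟩ : ∃ t : ℝ, t = max k₀ 1 := ⟨_, rfl⟩
  have hm₀k₀ : k₀ ≤ m₀ := hm₀def ▸ le_max_left _ _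
  have hm₀1 : (1:ℝ) ≤ m₀ := hm₀def ▸ le_max_right _ _
  have he0 : 0 < (1 - θ) * ρ := mul_pos (by linarith) hρ
  obtain ⟨C, hCdef⟩ : ∃ t : ℝ, t = c₀ * (2:ℝ) ^ ((1 + θ) * ρ) := ⟨_, rfl⟩
  have hC0 : 0 < C := hCdef ▸ mul_pos hc₀ (Real.rpow_pos_of_pos h2 _)
  obtain ⟨μ, hμdef⟩ : ∃ t : ℝ, t = (2:ℝ) ^ (-(ρ / lam)) := ⟨_, rfl⟩
  have hμ0 : 0 < μ := hμdef ▸ Real.rpow_pos_of_pos h2 _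
  have hμ1 : μ < 1 := hμdef ▸
    Real.rpow_lt_one_of_one_lt_of_neg one_lt_two (neg_lt_zero.mpr (div_pos hρ hlam))
  have hφm₀ : 0 ≤ φ m₀ := hφ0 _ (by linarith)
  obtain ⟨A, hAdef⟩ : ∃ t : ℝ, t = max 1 (C * φ m₀ ^ lam / μ) := ⟨_, rfl⟩
  have hA0 : (0:ℝ) ≤ A := hAdef ▸ le_trans zero_le_one (le_max_left _ _)
  obtain ⟨K, hKdef⟩ : ∃ t : ℝ, t = max m₀ (A ^ ((1 - θ) * ρ)⁻¹) := ⟨_, rfl⟩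
  have hKm₀ : m₀ ≤ K := hKdef ▸ le_max_left _ _
  have hK1 : (1:ℝ) ≤ K := le_trans hm₀1 hKm₀
  have hK0 : (0:ℝ) < K := by linarith
  have hKe : A ≤ K ^ ((1 - θ) * ρ) := by
    calc A = (A ^ ((1 - θ) * ρ)⁻¹) ^ ((1 - θ) * ρ) :=
          (Real.rpow_inv_rpow hA0 he0.ne').symm
      _ ≤ K ^ ((1 - θ) * ρ) :=
          Real.rpow_le_rpow (Real.rpow_nonneg hA0 _) (hKdef ▸ le_max_right _ _) he0.le
  have hφK : 0 ≤ φ K := hφ0 _ hK0.le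
  have hKey : C * φ K ^ lam ≤ μ * K ^ ((1 - θ) * ρ) := by
    have h1 : φ K ≤ φ m₀ :=
      hmono (Set.mem_Ici.mpr (by linarith)) (Set.mem_Ici.mpr hK0.le) hKm₀
    have h2' : φ K ^ lam ≤ φ m₀ ^ lam := Real.rpow_le_rpow hφK h1 hlam.le
    have h3 : C * φ m₀ ^ lam / μ ≤ A := hAdef ▸ le_max_right _ _
    have h4 : C * φ m₀ ^ lam ≤ μ * A := by
      rw [div_le_iff₀ hμ0] at h3; nlinarith
    calc C * φ K ^ lam ≤ C * φ m₀ ^ lam := by nlinarith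
      _ ≤ μ * A := h4
      _ ≤ μ * K ^ ((1 - θ) * ρ) := by nlinarith
  by_cases hM : φ K = 0
  · exact ⟨K, hK0, hM⟩
  have hM0 : 0 < φ K := lt_of_le_of_ne hφK (Ne.symm hM)
  obtain ⟨k, hkdef⟩ : ∃ t : ℕ → ℝ, t = fun n => K * (2 - (1/2:ℝ) ^ n) := ⟨_, rfl⟩
  have hhalfpos : ∀ n : ℕ, (0:ℝ) < (1/2:ℝ) ^ n := fun n => pow_pos (by norm_num) n
  have hhalfle : ∀ n : ℕ, ((1/2:ℝ)) ^ n ≤ 1 := fun n => pow_le_one₀ (by norm_num) (by norm_num)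
  have hkK : ∀ n, K ≤ k n := by
    intro n; rw [hkdef]; nlinarith [hhalfle n]
  have hk2K : ∀ n, k n ≤ 2 * K := by
    intro n; rw [hkdef]; nlinarith [hhalfpos n]
  have hkpos : ∀ n, 0 < k n := fun n => lt_of_lt_of_le hK0 (hkK n)
  have hkk₀ : ∀ n, k₀ ≤ k n := fun n => le_trans (le_trans hm₀k₀ hKm₀) (hkK n)
  have hdiff : ∀ n : ℕ, k (n + 1) - k n = K * (1/2:ℝ) ^ (n + 1) := by
    intro n; rw [hkdef]; simp only [pow_succ]; ring
  have hklt : ∀ n, k n < k (n + 1) := by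
    intro n
    have hd := hdiff n
    have := mul_pos hK0 (hhalfpos (n + 1))
    linarith
  obtain ⟨P, hPdef⟩ : ∃ t : ℝ, t = (2:ℝ) ^ (-ρ) := ⟨_, rfl⟩
  have hP0 : 0 < P := hPdef ▸ Real.rpow_pos_of_pos h2 _
  have hhalfρ : (1/2:ℝ) ^ ρ = P := by
    rw [hPdef, one_div, Real.inv_rpow h2.le, ← Real.rpow_neg h2.le]
  have hpowρ : ∀ m : ℕ, ((1/2:ℝ) ^ m) ^ ρ = P ^ m := by
    intro m
    rw [pow_rpow_comm _ (by norm_num) ρ m, hhalfρ]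
  have hP1 : (2:ℝ) ^ ρ * P = 1 := by
    rw [hPdef, ← Real.rpow_add h2]; simp
  have hμlam : μ ^ (1 + lam) = μ * P := by
    rw [hμdef, hPdef, ← Real.rpow_mul h2.le, ← Real.rpow_add h2]
    congr 1
    field_simp
    ring
  obtain ⟨a, hadef⟩ : ∃ t : ℝ, t = (2:ℝ) ^ (θ * ρ) := ⟨_, rfl⟩
  have ha0 : 0 < a := hadef ▸ Real.rpow_pos_of_pos h2 _
  obtain ⟨x, hxdef⟩ : ∃ t : ℝ, t = K ^ ρ := ⟨_, rfl⟩
  have hx0 : 0 < x := hxdef ▸ Real.rpow_pos_of_pos hK0 _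
  obtain ⟨y, hydef⟩ : ∃ t : ℝ, t = K ^ (θ * ρ) := ⟨_, rfl⟩
  have hy0 : 0 < y := hydef ▸ Real.rpow_pos_of_pos hK0 _
  obtain ⟨m, hmdef⟩ : ∃ t : ℝ, t = φ K ^ lam := ⟨_, rfl⟩
  have hm0 : 0 < m := hmdef ▸ Real.rpow_pos_of_pos hM0 _
  have hC2 : C = c₀ * ((2:ℝ) ^ ρ * a) := by
    rw [hCdef, hadef, ← Real.rpow_add h2]; ring_nf
  have hK2 : K ^ ((1 - θ) * ρ) = x / y := by
    rw [hxdef, hydef, show (1 - θ) * ρ = ρ - θ * ρ by ring, Real.rpow_sub hK0]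
  have key2 : c₀ * a * m * y ≤ μ * x * P := by
    rw [hC2, hK2, ← hmdef] at hKey
    have h5 := mul_le_mul_of_nonneg_right hKey (le_of_lt (mul_pos hy0 hP0))
    have h6 : μ * (x / y) * (y * P) = μ * x * P := by field_simp
    have h7 : c₀ * ((2:ℝ) ^ ρ * a) * m * (y * P) = c₀ * a * m * y := by
      linear_combination c₀ * a * m * y * hP1
    linarith
  have main : ∀ n : ℕ, φ (k n) ≤ φ K * μ ^ n := by
    intro n
    induction n with
    | zero => rw [hkdef]; norm_num
    | succ n ih =>
      have h1 := hineq (k (n + 1)) (k n) (hkk₀ n) (hklt n)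
      have hdpos : 0 < (k (n + 1) - k n) ^ ρ :=
        Real.rpow_pos_of_pos (by linarith [hklt n]) _
      have hb1 : (k n) ^ (θ * ρ) ≤ (2 * K) ^ (θ * ρ) :=
        Real.rpow_le_rpow (hkpos n).le (hk2K n) (by positivity)
      have hφkn : 0 ≤ φ (k n) := hφ0 _ (hkpos n).le
      have hb2 : φ (k n) ^ (1 + lam) ≤ (φ K * μ ^ n) ^ (1 + lam) :=
        Real.rpow_le_rpow hφkn ih (by linarith)
      have h2' : φ (k (n + 1)) ≤
          c₀ / (k (n + 1) - k n) ^ ρ * (2 * K) ^ (θ * ρ) * ((φ K * μ ^ n) ^ (1 + lam)) := by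
        refine le_trans h1 ?_
        have hcd : 0 ≤ c₀ / (k (n + 1) - k n) ^ ρ := by positivity
        exact mul_le_mul (mul_le_mul_of_nonneg_left hb1 hcd) hb2
          (Real.rpow_nonneg hφkn _) (by positivity)
      refine le_trans h2' ?_
      rw [hdiff n, Real.mul_rpow hK0.le (hhalfpos (n + 1)).le, hpowρ (n + 1),
        Real.mul_rpow h2.le hK0.le, Real.mul_rpow hφK (pow_nonneg hμ0.le n),
        pow_rpow_comm μ hμ0.le (1 + lam) n, hμlam, ← hxdef, ← hydef, ← hadef,
        show φ K ^ (1 + lam) = φ K * m by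
          rw [hmdef, Real.rpow_add hM0, Real.rpow_one]]
      rw [div_mul_eq_mul_div, div_mul_eq_mul_div, div_le_iff₀ (by positivity)]
      have h5 := mul_le_mul_of_nonneg_right key2
        (show (0:ℝ) ≤ φ K * μ ^ n * P ^ n by positivity)
      calc c₀ * (a * y) * (φ K * m * (μ * P) ^ n)
          = c₀ * a * m * y * (φ K * μ ^ n * P ^ n) := by rw [mul_pow]; ring
        _ ≤ μ * x * P * (φ K * μ ^ n * P ^ n) := h5
        _ = φ K * μ ^ (n + 1) * (x * P ^ (n + 1)) := by rw [pow_succ, pow_succ]; ring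
  have hbound : ∀ n : ℕ, φ (2 * K) ≤ φ K * μ ^ n := by
    intro n
    refine le_trans ?_ (main n)
    exact hmono (Set.mem_Ici.mpr (hkpos n).le) (Set.mem_Ici.mpr (by linarith)) (hk2K n)
  have htend : Filter.Tendsto (fun n : ℕ => φ K * μ ^ n) Filter.atTop (nhds 0) := by
    have := (tendsto_pow_atTop_nhds_zero_of_lt_one hμ0.le hμ1).const_mul (φ K)
    simpa using this
  have hle0 : φ (2 * K) ≤ 0 := ge_of_tendsto' htend hbound
  exact ⟨2 * K, by linarith, le_antisymm hle0 (hφ0 _ (by linarith))⟩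
end

section
/- For every p > 1, a ≥ 0 and s ≥ 0, the inequality s^p ≤ (a + s²)^((p-2)/2) s² + a^(p/2) holds. -/
/-- For every `p > 1`, `a ≥ 0` and `s ≥ 0`: `s^p ≤ (a + s²)^((p-2)/2) s² + a^(p/2)`. -/
theorem stmt4 (p a s : ℝ) (hp : 1 < p) (ha : 0 ≤ a) (hs : 0 ≤ s) :
    s ^ p ≤ (a + s ^ 2) ^ ((p - 2) / 2) * s ^ 2 + a ^ (p / 2) := by
  have hp0 : 0 < p := by linarith
  rcases eq_or_lt_of_le hs with hs0 | hs0
  · -- s = 0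
    rw [← hs0]
    rw [Real.zero_rpow (ne_of_gt hp0)]
    positivity
  have ht : (0:ℝ) < a + s ^ 2 := by positivity
  have hsp : s ^ p = (s ^ 2) ^ (p / 2) := by
    rw [← Real.rpow_natCast s 2, ← Real.rpow_mul hs]
    congr 1; ring
  rcases le_or_gt 2 p with h2p | h2p
  · -- p ≥ 2 : (a+s²)^((p-2)/2) ≥ (s²)^((p-2)/2) = s^(p-2)
    have h1 : (s ^ 2) ^ ((p - 2) / 2) ≤ (a + s ^ 2) ^ ((p - 2) / 2) :=
      Real.rpow_le_rpow (by positivity) (by linarith) (by linarith)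
    have h2 : (s ^ 2) ^ ((p - 2) / 2) * s ^ 2 = s ^ p := by
      rw [← Real.rpow_natCast s 2, ← Real.rpow_mul hs, ← Real.rpow_add hs0]
      ring_nf
    have h3 : (0:ℝ) ≤ a ^ (p / 2) := by positivity
    nlinarith [sq_nonneg s]
  · -- 1 < p < 2
    have key : (a + s ^ 2) ^ ((p - 2) / 2) * s ^ 2
        = (a + s ^ 2) ^ (p / 2) - a * (a + s ^ 2) ^ ((p - 2) / 2) := by
      have h : (a + s ^ 2) ^ ((p - 2) / 2) * (a + s ^ 2) = (a + s ^ 2) ^ (p / 2) := by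
        rw [← Real.rpow_add_one (ne_of_gt ht)]
        ring_nf
      nlinarith [h]
    rw [key]
    have h1 : s ^ p ≤ (a + s ^ 2) ^ (p / 2) := by
      rw [hsp]
      exact Real.rpow_le_rpow (by positivity) (by linarith) (by positivity)
    rcases eq_or_lt_of_le ha with ha0 | ha0
    · rw [← ha0]
      simp only [zero_mul, sub_zero]
      rw [Real.zero_rpow (by positivity)]
      rw [← ha0, zero_add] at h1
      rw [zero_add]
      linarith
    have h2 : a * (a + s ^ 2) ^ ((p - 2) / 2) ≤ a ^ (p / 2) := by
      have hexp : (p - 2) / 2 ≤ 0 := by linarith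
      have hle : (a + s ^ 2) ^ ((p - 2) / 2) ≤ a ^ ((p - 2) / 2) :=
        Real.rpow_le_rpow_of_nonpos ha0 (le_add_of_nonneg_right (sq_nonneg s)) hexp
      calc a * (a + s ^ 2) ^ ((p - 2) / 2) ≤ a * a ^ ((p - 2) / 2) :=
            mul_le_mul_of_nonneg_left hle ha
        _ = a ^ (p / 2) := by
            nth_rewrite 1 [← Real.rpow_one a]
            rw [← Real.rpow_add ha0]; ring_nf
    linarith
end

section
/- Let N ≥ 2. Define R_N(X, Y) = |X + Y|^N - |X|^N - N|X|^(N-2) X·Y for X, Y ∈ ℝ^N. Then there exists a constant c_N > 0 (one may take c_N = N(N-1)2^(N-4) for N ≥ 3) such that 0 ≤ R_N(X, Y) ≤ c_N(|Y|^N + |Y|²|X|^(N-2)) for all X, Y ∈ ℝ^N. -/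
open scoped RealInnerProductSpace

/-!
Write `a = ‖X‖`, `b = ‖X + Y‖`, `v = ‖Y‖`, so that `b² = a² + 2⟪X, Y⟫ + v²` and `|b - a| ≤ v`.
Eliminating `⟪X, Y⟫` splits `R_N(X, Y)` as `E_N + (N/2) a^(N-2) (v² - (b - a)²)`, where
`E_N = b^N - a^N - N a^(N-1) (b - a)` is the error of the tangent line of `x ↦ x^N` at `a`.
The second summand lies between `0` and `(N/2) a^(N-2) v²`. The recursion
`E_(N+1) = b E_N + N a^(N-1) (b - a)²` shows by induction that `E_N ≥ 0` for `a, b ≥ 0` and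
`|E_N| ≤ N(N-1)/2 (b - a)² (|a| + |b - a|)^(N-2)`. Hence `R_N ≤ N(N-1)/2 v² (a + v)^(N-2)`,
and `(a + v)^n ≤ 2^(n-1) (a^n + v^n)` gives the constant `N(N-1) 2^(N-4)`, valid also for `N = 2`.
-/

lemma pow_sub_pow_sub_mul_sub_zero (a b : ℝ) :
    b ^ (0 + 2) - a ^ (0 + 2) - ((0 : ℕ) + 2) * a ^ (0 + 1) * (b - a) = (b - a) ^ 2 := by
  push_cast
  ring

lemma pow_sub_pow_sub_mul_sub_succ (a b : ℝ) (n : ℕ) :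
    b ^ (n + 1 + 2) - a ^ (n + 1 + 2) - ((n + 1 : ℕ) + 2) * a ^ (n + 1 + 1) * (b - a) =
      b * (b ^ (n + 2) - a ^ (n + 2) - (n + 2) * a ^ (n + 1) * (b - a)) +
        (n + 2) * a ^ (n + 1) * (b - a) ^ 2 := by
  push_cast
  ring

lemma pow_sub_pow_sub_mul_sub_nonneg {a b : ℝ} (ha : 0 ≤ a) (hb : 0 ≤ b) (n : ℕ) :
    0 ≤ b ^ (n + 2) - a ^ (n + 2) - (n + 2) * a ^ (n + 1) * (b - a) := by
  induction n with
  | zero =>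
    rw [pow_sub_pow_sub_mul_sub_zero]
    positivity
  | succ n ih =>
    rw [pow_sub_pow_sub_mul_sub_succ]
    positivity

lemma abs_pow_sub_pow_sub_mul_sub_le (a b : ℝ) (n : ℕ) :
    |b ^ (n + 2) - a ^ (n + 2) - (n + 2) * a ^ (n + 1) * (b - a)| ≤
      (n + 2) * (n + 1) / 2 * (b - a) ^ 2 * (|a| + |b - a|) ^ n := by
  induction n with
  | zero =>
    rw [pow_sub_pow_sub_mul_sub_zero, abs_of_nonneg (sq_nonneg _)]
    norm_num
  | succ n ih =>
    set c := |a| + |b - a|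
    have hb : |b| ≤ c := by simpa using abs_add_le a (b - a)
    have ha : |a| ≤ c := le_add_of_nonneg_right (abs_nonneg _)
    rw [pow_sub_pow_sub_mul_sub_succ]
    calc _ ≤ |b| * |b ^ (n + 2) - a ^ (n + 2) - (n + 2) * a ^ (n + 1) * (b - a)| +
          (n + 2) * |a| ^ (n + 1) * (b - a) ^ 2 := by
          refine (abs_add_le _ _).trans_eq ?_
          rw [abs_mul, abs_mul, abs_mul, abs_pow, abs_of_nonneg (sq_nonneg (b - a)),
            abs_of_nonneg (by positivity : (0 : ℝ) ≤ n + 2)]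
      _ ≤ c * ((n + 2) * (n + 1) / 2 * (b - a) ^ 2 * c ^ n) +
          (n + 2) * c ^ (n + 1) * (b - a) ^ 2 := by
          gcongr
      _ = _ := by push_cast; ring

lemma pow_sub_pow_sub_mul_eq {a b s v : ℝ} (hs : b ^ 2 = a ^ 2 + 2 * s + v ^ 2) (n : ℕ) :
    b ^ (n + 2) - a ^ (n + 2) - (n + 2) * a ^ n * s =
      (b ^ (n + 2) - a ^ (n + 2) - (n + 2) * a ^ (n + 1) * (b - a)) +
        (n + 2) / 2 * a ^ n * (v ^ 2 - (b - a) ^ 2) := by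
  linear_combination ((n + 2) / 2 * a ^ n) * hs

lemma pow_sub_pow_sub_mul_nonneg {a b s v : ℝ} (ha : 0 ≤ a) (hb : 0 ≤ b)
    (hs : b ^ 2 = a ^ 2 + 2 * s + v ^ 2) (hab : |b - a| ≤ v) (n : ℕ) :
    0 ≤ b ^ (n + 2) - a ^ (n + 2) - (n + 2) * a ^ n * s := by
  rw [pow_sub_pow_sub_mul_eq hs]
  have hsq : 0 ≤ v ^ 2 - (b - a) ^ 2 := sub_nonneg.mpr (sq_le_sq.mpr (hab.trans (le_abs_self v)))
  have := pow_sub_pow_sub_mul_sub_nonneg ha hb n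
  positivity

lemma pow_sub_pow_sub_mul_le {a b s v : ℝ} (ha : 0 ≤ a)
    (hs : b ^ 2 = a ^ 2 + 2 * s + v ^ 2) (hab : |b - a| ≤ v) (n : ℕ) :
    b ^ (n + 2) - a ^ (n + 2) - (n + 2) * a ^ n * s ≤
      (n + 2) * (n + 1) / 2 * v ^ 2 * (a + v) ^ n := by
  rw [pow_sub_pow_sub_mul_eq hs]
  have hv : 0 ≤ v := (abs_nonneg _).trans hab
  have hsq : (b - a) ^ 2 ≤ v ^ 2 := sq_le_sq.mpr (hab.trans (le_abs_self v))
  have hpow : a ^ n ≤ (a + v) ^ n := by gcongr; linarith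
  have hrem : (|a| + |b - a|) ^ n ≤ (a + v) ^ n := by rw [abs_of_nonneg ha]; gcongr
  calc _ ≤ (n + 2) * (n + 1) / 2 * (b - a) ^ 2 * (a + v) ^ n +
        (n + 2) * (n + 1) / 2 * (a + v) ^ n * (v ^ 2 - (b - a) ^ 2) := by
        gcongr
        · exact (le_abs_self _).trans ((abs_pow_sub_pow_sub_mul_sub_le a b n).trans (by gcongr))
        · nlinarith [(n.cast_nonneg : (0 : ℝ) ≤ n)]
    _ = _ := by ring

lemma two_mul_add_pow_le {a b : ℝ} (ha : 0 ≤ a) (hb : 0 ≤ b) (n : ℕ) :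
    2 * (a + b) ^ n ≤ 2 ^ n * (a ^ n + b ^ n) := by
  cases n with
  | zero => norm_num
  | succ n =>
    have := add_pow_le ha hb (n + 1)
    rw [Nat.add_sub_cancel] at this
    calc _ ≤ 2 * (2 ^ n * (a ^ (n + 1) + b ^ (n + 1))) := by gcongr
      _ = _ := by ring

section InnerProductSpace

variable {E : Type*} [NormedAddCommGroup E] [InnerProductSpace ℝ E] (X Y : E) (n : ℕ)

theorem norm_add_pow_sub_pow_sub_inner_nonneg :
    0 ≤ ‖X + Y‖ ^ (n + 2) - ‖X‖ ^ (n + 2) - (n + 2) * ‖X‖ ^ n * ⟪X, Y⟫ :=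
  pow_sub_pow_sub_mul_nonneg (norm_nonneg X) (norm_nonneg _) (norm_add_sq_real X Y)
    (by simpa using abs_norm_sub_norm_le (X + Y) X) n

theorem norm_add_pow_sub_pow_sub_inner_le :
    ‖X + Y‖ ^ (n + 2) - ‖X‖ ^ (n + 2) - (n + 2) * ‖X‖ ^ n * ⟪X, Y⟫ ≤
      (n + 2) * (n + 1) * 2 ^ ((n : ℝ) - 2) * (‖Y‖ ^ (n + 2) + ‖Y‖ ^ 2 * ‖X‖ ^ n) := by
  calc _ ≤ (n + 2) * (n + 1) / 2 * ‖Y‖ ^ 2 * (‖X‖ + ‖Y‖) ^ n :=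
        pow_sub_pow_sub_mul_le (norm_nonneg X) (norm_add_sq_real X Y)
          (by simpa using abs_norm_sub_norm_le (X + Y) X) n
    _ = (n + 2) * (n + 1) / 4 * ‖Y‖ ^ 2 * (2 * (‖X‖ + ‖Y‖) ^ n) := by ring
    _ ≤ (n + 2) * (n + 1) / 4 * ‖Y‖ ^ 2 * (2 ^ n * (‖X‖ ^ n + ‖Y‖ ^ n)) :=
        mul_le_mul_of_nonneg_left (two_mul_add_pow_le (norm_nonneg X) (norm_nonneg Y) n)
          (by positivity)
    _ = _ := by
        rw [Real.rpow_sub two_pos, Real.rpow_natCast, Real.rpow_two]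
        ring

end InnerProductSpace

/-- For `N ≥ 2` and `R_N(X,Y) = |X+Y|^N - |X|^N - N|X|^(N-2) X⬝Y`, there is `c_N > 0`
(for `N ≥ 3` one may take `c_N = N(N-1)2^(N-4)`) with
`0 ≤ R_N(X,Y) ≤ c_N (|Y|^N + |Y|²|X|^(N-2))` for all `X, Y ∈ ℝ^N`. -/
theorem stmt6 (N : ℕ) (hN : 2 ≤ N) :
    (∃ c : ℝ, 0 < c ∧ ∀ X Y : EuclideanSpace ℝ (Fin N),
        0 ≤ ‖X + Y‖ ^ N - ‖X‖ ^ N - (N : ℝ) * ‖X‖ ^ (N - 2) * ⟪X, Y⟫ ∧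
        ‖X + Y‖ ^ N - ‖X‖ ^ N - (N : ℝ) * ‖X‖ ^ (N - 2) * ⟪X, Y⟫ ≤
          c * (‖Y‖ ^ N + ‖Y‖ ^ 2 * ‖X‖ ^ (N - 2))) ∧
    (3 ≤ N → ∀ X Y : EuclideanSpace ℝ (Fin N),
        ‖X + Y‖ ^ N - ‖X‖ ^ N - (N : ℝ) * ‖X‖ ^ (N - 2) * ⟪X, Y⟫ ≤
          ((N : ℝ) * ((N : ℝ) - 1) * (2 : ℝ) ^ ((N : ℝ) - 4)) *
            (‖Y‖ ^ N + ‖Y‖ ^ 2 * ‖X‖ ^ (N - 2))) := by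
  obtain ⟨n, rfl⟩ := Nat.exists_eq_add_of_le' hN
  refine ⟨⟨(n + 2) * (n + 1) * 2 ^ ((n : ℝ) - 2), by positivity, fun X Y => ⟨?_, ?_⟩⟩,
    fun _ X Y => ?_⟩
  · simpa using norm_add_pow_sub_pow_sub_inner_nonneg X Y n
  all_goals
    convert norm_add_pow_sub_pow_sub_inner_le X Y n using 3 <;> push_cast <;> ring_nf
end

section
/- Let N ≥ 4 be even and define R_N(X, Y) = |X + Y|^N - |X|^N - N|X|^(N-2) X·Y for X, Y ∈ ℝ^N. Then R_N(X, Y) ≥ (N/2) |X|^(N-2) |Y|² for all X, Y ∈ ℝ^N. -/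
open scoped RealInnerProductSpace

lemma aux_pow (a c : ℝ) (ha : 0 ≤ a) (hc : 0 ≤ c) :
    ∀ m : ℕ, a ^ (m + 1) + (m + 1 : ℝ) * a ^ m * (c - a) ≤ c ^ (m + 1) := by
  intro m
  induction m with
  | zero => norm_num
  | succ m ih =>
      have h1 : (0:ℝ) ≤ a ^ m := pow_nonneg ha m
      have h2 : (0:ℝ) ≤ (c - a) ^ 2 := sq_nonneg _
      have h3 : c * (a ^ (m + 1) + (m + 1 : ℝ) * a ^ m * (c - a)) ≤ c * c ^ (m + 1) :=
        mul_le_mul_of_nonneg_left ih hc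
      rw [pow_succ a m] at h3
      rw [show a ^ (m + 1 + 1) = a ^ m * a * a by rw [pow_succ, pow_succ],
        show a ^ (m + 1) = a ^ m * a from pow_succ a m,
        show c ^ (m + 1 + 1) = c ^ (m + 1) * c from pow_succ c (m + 1)]
      push_cast
      nlinarith [h3, mul_nonneg h1 h2, mul_nonneg (mul_nonneg h1 h2) (Nat.cast_nonneg m : (0:ℝ) ≤ m)]

/-- For even `N ≥ 4` and `R_N(X,Y) = |X+Y|^N - |X|^N - N|X|^(N-2) X⬝Y`, one has
`R_N(X,Y) ≥ (N/2)|X|^(N-2)|Y|²` for all `X, Y ∈ ℝ^N`. -/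
theorem stmt8 (N : ℕ) (hN : 4 ≤ N) (hNe : Even N) (X Y : EuclideanSpace ℝ (Fin N)) :
    ((N : ℝ) / 2) * ‖X‖ ^ (N - 2) * ‖Y‖ ^ 2 ≤
      ‖X + Y‖ ^ N - ‖X‖ ^ N - (N : ℝ) * ‖X‖ ^ (N - 2) * ⟪X, Y⟫ := by
  obtain ⟨k, hk⟩ := hNe
  have hk2 : 2 ≤ k := by omega
  obtain ⟨m, rfl⟩ : ∃ m, k = m + 1 := ⟨k - 1, by omega⟩
  have hN' : N = 2 * (m + 1) := by omega
  have hN2 : N - 2 = 2 * m := by omega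
  have ha : (0:ℝ) ≤ ‖X‖ ^ 2 := sq_nonneg _
  have hc : (0:ℝ) ≤ ‖X + Y‖ ^ 2 := sq_nonneg _
  have key := aux_pow (‖X‖ ^ 2) (‖X + Y‖ ^ 2) ha hc m
  have hexp : ‖X + Y‖ ^ 2 = ‖X‖ ^ 2 + 2 * ⟪X, Y⟫ + ‖Y‖ ^ 2 :=
    norm_add_sq_real X Y
  have e1 : ‖X + Y‖ ^ N = (‖X + Y‖ ^ 2) ^ (m + 1) := by
    rw [← pow_mul]
    congr 1
  have e2 : ‖X‖ ^ N = (‖X‖ ^ 2) ^ (m + 1) := by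
    rw [← pow_mul]
    congr 1
  have e3 : ‖X‖ ^ (N - 2) = (‖X‖ ^ 2) ^ m := by
    rw [← pow_mul]
    congr 1
  have eN : (N : ℝ) = 2 * (m + 1 : ℝ) := by rw [hN']; push_cast; ring
  rw [hexp] at key
  rw [e1, e2, e3, eN, hexp]
  nlinarith [key]
end

section
/- Let N ≥ 2 and define μ_N(x) = 1 / (V_N (1 + |x|^(N/(N-1)))^N) for x ∈ ℝ^N, where V_N is the volume of the unit ball in ℝ^N. Then ∫_{ℝ^N} μ_N(x) dx = 1, i.e. μ_N is a probability density on ℝ^N. -/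
/-!
In polar coordinates the integral is `N V_N ∫₀^∞ ρ^(N-1) / (V_N (1 + ρ^p)^N) dρ` with
`p = N/(N-1)`. Since `p (N-1) = N`, the substitution `t = ρ^p` turns `ρ^(N-1) dρ` into
`p⁻¹ t^(N-2) dt`, and `∫₀^∞ (N-1) t^(N-2) / (1+t)^N dt = 1` because `(t/(1+t))^(N-1)` is an
antiderivative vanishing at `0` and tending to `1` at infinity.
-/

open MeasureTheory Set Filter Topology

lemma hasDerivAt_div_one_add_pow (m : ℕ) {t : ℝ} (ht : 1 + t ≠ 0) :
    HasDerivAt (fun t : ℝ => (t / (1 + t)) ^ (m + 1))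
      ((m + 1) * t ^ m / (1 + t) ^ (m + 2)) t := by
  have h := ((hasDerivAt_id' t).div ((hasDerivAt_id' t).const_add 1) ht).pow (m + 1)
  refine h.congr_deriv ?_
  simp only [Pi.div_apply, add_tsub_cancel_right]
  push_cast
  rw [div_pow]
  field_simp
  ring

lemma tendsto_div_one_add_atTop : Tendsto (fun t : ℝ => t / (1 + t)) atTop (𝓝 1) := by
  have h : Tendsto (fun t : ℝ => 1 - (1 + t)⁻¹) atTop (𝓝 (1 - 0)) :=
    tendsto_const_nhds.sub (tendsto_atTop_add_const_left _ 1 tendsto_id).inv_tendsto_atTop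
  rw [sub_zero] at h
  refine h.congr' ?_
  filter_upwards [eventually_gt_atTop 0] with t ht
  field_simp
  ring

lemma integral_pow_div_one_add_pow_Ioi (m : ℕ) :
    ∫ t in Ioi (0 : ℝ), (m + 1) * t ^ m / (1 + t) ^ (m + 2) = 1 := by
  have hderiv (t : ℝ) (ht : t ∈ Ici 0) := hasDerivAt_div_one_add_pow m (t := t)
    (by linarith [mem_Ici.mp ht])
  have hnonneg (t : ℝ) (ht : t ∈ Ioi 0) : 0 ≤ (m + 1) * t ^ m / (1 + t) ^ (m + 2) := by
    have := mem_Ioi.mp ht; positivity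
  rw [integral_Ioi_of_hasDerivAt_of_nonneg' hderiv hnonneg
    (by simpa using tendsto_div_one_add_atTop.pow (m + 1))]
  simp

lemma rpow_sub_one_mul_rpow_pow {r : ℝ} (hr : 0 < r) (p : ℝ) (m : ℕ) :
    r ^ (p - 1) * (r ^ p) ^ m = r ^ (p * (m + 1) - 1) := by
  rw [← Real.rpow_natCast, ← Real.rpow_mul hr.le, ← Real.rpow_add hr]
  ring_nf

/-- For `N ≥ 2`, `μ_N(x) = 1/(V_N (1 + |x|^(N/(N-1)))^N)` is a probability density on
`ℝ^N`, where `V_N` is the volume of the unit ball. -/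
theorem stmt9 (N : ℕ) (hN : 2 ≤ N) :
    ∫ x : EuclideanSpace ℝ (Fin N),
      1 / ((volume (Metric.ball (0 : EuclideanSpace ℝ (Fin N)) 1)).toReal *
        (1 + ‖x‖ ^ ((N : ℝ) / ((N : ℝ) - 1))) ^ N) = 1 := by
  obtain ⟨m, rfl⟩ : ∃ m, N = m + 2 := ⟨N - 2, by omega⟩
  set V := (volume (Metric.ball (0 : EuclideanSpace ℝ (Fin (m + 2))) 1)).toReal with hV
  have hV_pos : 0 < V := ENNReal.toReal_pos (Metric.measure_ball_pos volume 0 one_pos).ne'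
    measure_ball_lt_top.ne
  set p : ℝ := ((m + 2 : ℕ) : ℝ) / ((m + 2 : ℕ) - 1)
  have hp : p = (m + 2) / (m + 1) := by
    simp only [p]; push_cast; ring_nf
  have hp_pos : 0 < p := by rw [hp]; positivity
  have hradial : ∫ r in Ioi (0 : ℝ), r ^ (m + 2 - 1) • (1 / (V * (1 + r ^ p) ^ (m + 2))) =
      (p * (m + 1) * V)⁻¹ * ∫ t in Ioi (0 : ℝ), (m + 1) * t ^ m / (1 + t) ^ (m + 2) := by
    rw [← integral_comp_rpow_Ioi (fun t => (m + 1) * t ^ m / (1 + t) ^ (m + 2)) hp_pos.ne',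
      ← integral_const_mul]
    refine setIntegral_congr_fun measurableSet_Ioi fun r hr => ?_
    have hweight : r ^ (p - 1) * (r ^ p) ^ m = r ^ (m + 1) := by
      rw [rpow_sub_one_mul_rpow_pow hr, hp, ← Real.rpow_natCast]
      congr 1; push_cast; field_simp; ring
    rw [abs_of_pos hp_pos, smul_eq_mul, smul_eq_mul, show m + 2 - 1 = m + 1 by omega, ← hweight]
    field_simp
  rw [integral_fun_norm_addHaar volume (fun r => 1 / (V * (1 + r ^ p) ^ (m + 2))),
    finrank_euclideanSpace_fin, hradial, integral_pow_div_one_add_pow_Ioi, measureReal_def, ← hV,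
    hp]
  simp only [nsmul_eq_mul, smul_eq_mul]
  push_cast
  field_simp
end

section
/- Let N ≥ 2, V_N the volume of the unit ball in ℝ^N, μ_N(x) = 1/(V_N (1 + |x|^(N/(N-1)))^N), and v_N(x) = ln μ_N(x). Then the N-Laplacian of v_N satisfies Δ_N v_N(x) = -N^N (N/(N-1))^(N-1) V_N μ_N(x) for all x ≠ 0, where Δ_N u = div(|∇u|^(N-2) ∇u). -/
/-!
The proof is a computation with radial functions. Put `p = N / (N - 1)`, the Hölder conjugate
of `N`, and `r = ‖y‖`. Then `v_N(y) = h(r)` with `h(r) = -log V_N - N log(1 + r^p)`, and the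
gradient of a radial function is `∇(h ∘ ‖·‖)(y) = (h'(r) / r) y`. Since `(p - 1)(N - 1) = 1`,
the power `r^((p-1)(N-1))` coming from `|h'(r)|^(N-2) h'(r)` is exactly `r`, so the flux
`|∇v_N|^(N-2) ∇v_N` is the field `g(‖y‖) y` with `g(r) = -(N p)^(N-1) / (1 + r^p)^(N-1)`.
The divergence of `g(‖y‖) y` is the trace of its derivative, `N g(r) + r g'(r)`, which equals
`-N^N p^(N-1) / (1 + r^p)^N = -N^N p^(N-1) V_N μ_N(y)`.
-/

open MeasureTheory InnerProductSpace
open scoped RealInnerProductSpace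

theorem hasDerivAt_log_one_div_mul_one_add_rpow_pow {V p r : ℝ} (N : ℕ) (hV : V ≠ 0)
    (hr : 0 < r) :
    HasDerivAt (fun s => Real.log (1 / (V * (1 + s ^ p) ^ N)))
      (-(N * (p * r ^ (p - 1) / (1 + r ^ p)))) r := by
  have hpos : ∀ s : ℝ, 0 < s → 0 < 1 + s ^ p := fun s hs => by positivity
  have hlog : HasDerivAt (fun s => -Real.log V - N * Real.log (1 + s ^ p))
      (-(N * (p * r ^ (p - 1) / (1 + r ^ p)))) r := by
    have := (((Real.hasDerivAt_rpow_const (p := p) (Or.inl hr.ne')).const_add 1).log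
      (hpos r hr).ne').const_mul (N : ℝ) |>.const_sub (-Real.log V)
    simpa using this
  refine hlog.congr_of_eventuallyEq ?_
  filter_upwards [Ioi_mem_nhds hr] with s hs
  rw [one_div, Real.log_inv, Real.log_mul hV (pow_ne_zero _ (hpos s hs).ne'), Real.log_pow]
  ring

theorem hasDerivAt_div_one_add_rpow_pow (c : ℝ) {p r : ℝ} (n : ℕ) (hr : 0 < r) :
    HasDerivAt (fun s => c / (1 + s ^ p) ^ n)
      (-(c * n * p * r ^ (p - 1) / (1 + r ^ p) ^ (n + 1))) r := by
  have hB : 0 < 1 + r ^ p := by positivity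
  have h := (hasDerivAt_const r c).fun_div
    (((Real.hasDerivAt_rpow_const (p := p) (Or.inl hr.ne')).const_add 1).fun_pow n)
    (pow_ne_zero n hB.ne')
  refine h.congr_deriv ?_
  rcases n with _ | n
  · simp
  · simp only [Nat.cast_add, Nat.cast_one, add_tsub_cancel_right]
    field_simp
    ring

theorem Real.HolderConjugate.abs_pow_sub_two_mul_div_eq {N : ℕ} {p r : ℝ}
    (hNp : (N : ℝ).HolderConjugate p) (hN : 2 ≤ N) (hr : 0 < r) :
    |-(N * (p * r ^ (p - 1) / (1 + r ^ p)))| ^ (N - 2) * -(N * (p * r ^ (p - 1) / (1 + r ^ p))) / r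
      = -((N * p) ^ (N - 1) / (1 + r ^ p) ^ (N - 1)) := by
  have hexp : (p - 1) * ((N - 1 : ℕ) : ℝ) = 1 := by
    rw [Nat.cast_sub (by omega), Nat.cast_one]
    linear_combination hNp.sub_one_mul_conj
  have hpow : (r ^ (p - 1)) ^ (N - 1) = r := by
    rw [← Real.rpow_natCast, ← Real.rpow_mul hr.le, hexp, Real.rpow_one]
  have ha : 0 < N * (p * r ^ (p - 1) / (1 + r ^ p)) := by
    have := hNp.symm.pos
    have := hNp.pos
    positivity
  rw [abs_neg, abs_of_pos ha, mul_neg, ← pow_succ, show N - 2 + 1 = N - 1 by omega, mul_pow,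
    div_pow, mul_pow, hpow]
  field_simp
  ring

section Radial

variable {E : Type*} [NormedAddCommGroup E] [InnerProductSpace ℝ E] {x : E}

theorem hasFDerivAt_norm_of_ne_zero (hx : x ≠ 0) :
    HasFDerivAt (‖·‖) (‖x‖⁻¹ • innerSL ℝ x) x := by
  have h := (hasStrictFDerivAt_norm_sq x).hasFDerivAt.sqrt (by positivity)
  simp only [Real.sqrt_sq (norm_nonneg _)] at h
  convert h using 1
  ext y
  simp only [smul_apply, coe_innerSL_apply, smul_eq_mul, one_div,
    mul_inv_rev, nsmul_eq_mul, Nat.cast_ofNat]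
  field_simp

theorem HasDerivAt.hasFDerivAt_comp_norm {h : ℝ → ℝ} {h' : ℝ} (hx : x ≠ 0)
    (hh : HasDerivAt h h' ‖x‖) :
    HasFDerivAt (fun y => h ‖y‖) ((h' / ‖x‖) • innerSL ℝ x) x := by
  have h := hh.comp_hasFDerivAt x (hasFDerivAt_norm_of_ne_zero hx)
  rwa [smul_smul, ← div_eq_mul_inv] at h

theorem HasDerivAt.hasGradientAt_comp_norm [CompleteSpace E] {h : ℝ → ℝ} {h' : ℝ} (hx : x ≠ 0)
    (hh : HasDerivAt h h' ‖x‖) :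
    HasGradientAt (fun y => h ‖y‖) ((h' / ‖x‖) • x) x := by
  rw [hasGradientAt_iff_hasFDerivAt, map_smul]
  exact hh.hasFDerivAt_comp_norm hx

theorem HasDerivAt.norm_pow_smul_gradient_comp_norm [CompleteSpace E] {h : ℝ → ℝ} {h' : ℝ}
    (k : ℕ) (hx : x ≠ 0) (hh : HasDerivAt h h' ‖x‖) :
    ‖gradient (fun y => h ‖y‖) x‖ ^ k • gradient (fun y => h ‖y‖) x
      = (|h'| ^ k * h' / ‖x‖) • x := by
  have hx' : ‖x‖ ≠ 0 := norm_ne_zero_iff.mpr hx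
  rw [(hh.hasGradientAt_comp_norm hx).gradient, norm_smul, smul_smul, Real.norm_eq_abs,
    abs_div, abs_norm, div_mul_cancel₀ _ hx', mul_div_assoc]

theorem HasDerivAt.hasFDerivAt_comp_norm_smul {g : ℝ → ℝ} {g' : ℝ} (hx : x ≠ 0)
    (hg : HasDerivAt g g' ‖x‖) :
    HasFDerivAt (fun y => g ‖y‖ • y)
      (g ‖x‖ • ContinuousLinearMap.id ℝ E + ((g' / ‖x‖) • innerSL ℝ x).smulRight x) x :=
  (hg.hasFDerivAt_comp_norm hx).smul (hasFDerivAt_id x)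

theorem HasDerivAt.trace_fderiv_comp_norm_smul [FiniteDimensional ℝ E] {g : ℝ → ℝ} {g' : ℝ}
    (hx : x ≠ 0) (hg : HasDerivAt g g' ‖x‖) :
    LinearMap.trace ℝ E (fderiv ℝ (fun y => g ‖y‖ • y) x)
      = Module.finrank ℝ E * g ‖x‖ + g' * ‖x‖ := by
  have hx' : ‖x‖ ≠ 0 := norm_ne_zero_iff.mpr hx
  rw [(hg.hasFDerivAt_comp_norm_smul hx).fderiv]
  simp only [ContinuousLinearMap.toLinearMap_add, ContinuousLinearMap.toLinearMap_smul,
    ContinuousLinearMap.coe_id, ContinuousLinearMap.coe_smulRight,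
    ContinuousLinearMap.toLinearMap_innerSL_apply, map_add, map_smul, LinearMap.trace_id,
    smul_eq_mul, LinearMap.trace_smulRight, LinearMap.smul_apply, innerₛₗ_apply_apply,
    inner_self_eq_norm_sq_to_K, Real.ringHom_apply]
  field_simp

theorem Real.HolderConjugate.trace_fderiv_div_one_add_rpow_pow_smul [FiniteDimensional ℝ E]
    {N : ℕ} {p : ℝ} (hNp : (N : ℝ).HolderConjugate p) (hE : Module.finrank ℝ E = N)
    (hx : x ≠ 0) :
    LinearMap.trace ℝ E
        (fderiv ℝ (fun y => (-((N * p) ^ (N - 1)) / (1 + ‖y‖ ^ p) ^ (N - 1)) • y) x)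
      = -((N : ℝ) ^ N * p ^ (N - 1) / (1 + ‖x‖ ^ p) ^ N) := by
  have hN : 1 ≤ N := by exact_mod_cast hNp.lt.le
  have hx' : 0 < ‖x‖ := norm_pos_iff.mpr hx
  rw [(hasDerivAt_div_one_add_rpow_pow _ (N - 1) hx').trace_fderiv_comp_norm_smul hx, hE,
    Nat.sub_add_cancel hN, Nat.cast_sub hN, Nat.cast_one]
  have hrp : ‖x‖ ^ (p - 1) * ‖x‖ = ‖x‖ ^ p := by
    rw [Real.rpow_sub_one hx'.ne']
    field_simp
  have hpowN : (N : ℝ) ^ N = N ^ (N - 1) * N := by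
    rw [← pow_succ, Nat.sub_add_cancel hN]
  have hBN : (1 + ‖x‖ ^ p) ^ N = (1 + ‖x‖ ^ p) ^ (N - 1) * (1 + ‖x‖ ^ p) := by
    rw [← pow_succ, Nat.sub_add_cancel hN]
  have hB : 0 < 1 + ‖x‖ ^ p := by positivity
  field_simp
  linear_combination (-((N * p) ^ (N - 1) * N)) * hBN
    + (N * p) ^ (N - 1) * p * (1 + ‖x‖ ^ p) ^ (N - 1) * (N - 1) * hrp
    + (N * p) ^ (N - 1) * (1 + ‖x‖ ^ p) ^ (N - 1) * ‖x‖ ^ p * hNp.sub_one_mul_conj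
    + (1 + ‖x‖ ^ p) ^ (N - 1) * p ^ (N - 1) * hpowN

end Radial

theorem EuclideanSpace.sum_inner_single_eq_trace {n : ℕ}
    (T : EuclideanSpace ℝ (Fin n) →L[ℝ] EuclideanSpace ℝ (Fin n)) :
    ∑ i, ⟪T (EuclideanSpace.single i 1), EuclideanSpace.single i 1⟫
      = LinearMap.trace ℝ _ (T : EuclideanSpace ℝ (Fin n) →ₗ[ℝ] EuclideanSpace ℝ (Fin n)) := by
  rw [LinearMap.trace_eq_sum_inner _ (EuclideanSpace.basisFun (Fin n) ℝ)]
  simp [EuclideanSpace.basisFun_apply, real_inner_comm]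

/-- For `N ≥ 2`, `μ_N(x) = 1/(V_N (1+|x|^(N/(N-1)))^N)` and `v_N = ln μ_N`, the
`N`-Laplacian (divergence of `|∇v_N|^(N-2) ∇v_N`) satisfies
`Δ_N v_N(x) = -N^N (N/(N-1))^(N-1) V_N μ_N(x)` for every `x ≠ 0`. -/
theorem stmt10 (N : ℕ) (hN : 2 ≤ N) (V : ℝ)
    (hV : V = (volume (Metric.ball (0 : EuclideanSpace ℝ (Fin N)) 1)).toReal)
    (μ v : EuclideanSpace ℝ (Fin N) → ℝ)
    (hμ : ∀ x, μ x = 1 / (V * (1 + ‖x‖ ^ ((N : ℝ) / ((N : ℝ) - 1))) ^ N))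
    (hv : ∀ x, v x = Real.log (μ x))
    (x : EuclideanSpace ℝ (Fin N)) (hx : x ≠ 0) :
    (∑ i : Fin N,
        ⟪fderiv ℝ (fun y => ‖gradient v y‖ ^ (N - 2) • gradient v y) x
            (EuclideanSpace.single i (1 : ℝ)),
          EuclideanSpace.single i (1 : ℝ)⟫) =
      -((N : ℝ) ^ N * ((N : ℝ) / ((N : ℝ) - 1)) ^ (N - 1) * V * μ x) := by
  have hNp : (N : ℝ).HolderConjugate ((N : ℝ) / ((N : ℝ) - 1)) :=
    .conjExponent (by exact_mod_cast hN)
  set p := (N : ℝ) / ((N : ℝ) - 1)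
  have hV0 : V ≠ 0 := by
    rw [hV]
    exact (ENNReal.toReal_pos (Metric.measure_ball_pos _ _ one_pos).ne'
      measure_ball_lt_top.ne).ne'
  have hv' : v = fun y => Real.log (1 / (V * (1 + ‖y‖ ^ p) ^ N)) :=
    funext fun y => by rw [hv, hμ]
  have hflux : (fun y => ‖gradient v y‖ ^ (N - 2) • gradient v y) =ᶠ[nhds x]
      fun y => (-((N * p) ^ (N - 1)) / (1 + ‖y‖ ^ p) ^ (N - 1)) • y := by
    filter_upwards [isOpen_compl_singleton.mem_nhds hx] with y hy
    have hy' : 0 < ‖y‖ := norm_pos_iff.mpr hy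
    have hprofile := hasDerivAt_log_one_div_mul_one_add_rpow_pow (p := p) N hV0 hy'
    rw [hv', hprofile.norm_pow_smul_gradient_comp_norm _ hy,
      hNp.abs_pow_sub_two_mul_div_eq hN hy', neg_div]
  rw [EuclideanSpace.sum_inner_single_eq_trace, hflux.fderiv_eq,
    hNp.trace_fderiv_div_one_add_rpow_pow_smul finrank_euclideanSpace_fin hx, hμ]
  field_simp
end

section
/- Let N ≥ 2, B_1 ⊂ ℝ^N the unit ball, v_N(x) = -ln(V_N (1+|x|^(N/(N-1)))^N), and ω̃_N = N^N (N/(N-1))^(N-1) ω_{N-1}. Then lim_{r→∞} [ (1/ω̃_N) ∫_{B_r} |∇v_N|^N dx - (N/(N-1)) ln r ] = - Σ_{k=1}^{N-1} 1/k, where B_r is the ball of radius r centered at the origin. -/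
/-!
With `p = N/(N-1)`, `v` is radial with profile `-log V - N log(1 + ρ^p)`, so
`|∇v| = N p ρ^(p-1)/(1 + ρ^p)`. In polar coordinates and after the substitution `t = ρ^p`,
`∫_{B_r} |∇v|^N = ω (N p)^N / p · ∫₀^{r^p} t^(N-1)/(1+t)^N dt = ω̃_N · logTail (N-1) (r^p)`,
so the normalised quantity is exactly `logTail (N-1) (r^p) - log (r^p)`. As `t → ∞`,
`log (1+t) - log t → 0` and `t/(1+t) → 1`, which leaves `-Σ_{k=1}^{N-1} 1/k`.
-/

open MeasureTheory Filter Finset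

/-- With `u = t/(1+t)` one has `log (1+t) = -log (1-u) = Σ_{k ≥ 1} u^k/k`; this is the tail of
that series after `n` terms. -/
noncomputable def logTail (n : ℕ) (t : ℝ) : ℝ :=
  Real.log (1 + t) - ∑ k ∈ range n, (t / (1 + t)) ^ (k + 1) / (k + 1)

theorem hasDerivAt_logTail (n : ℕ) {t : ℝ} (ht : 1 + t ≠ 0) :
    HasDerivAt (logTail n) (t ^ n / (1 + t) ^ (n + 1)) t := by
  have hu : HasDerivAt (fun t : ℝ => t / (1 + t)) (1 / (1 + t) ^ 2) t :=
    ((hasDerivAt_id' t).div ((hasDerivAt_id' t).const_add 1) ht).congr_deriv (by ring)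
  have hlog : HasDerivAt (fun t : ℝ => Real.log (1 + t)) (1 / (1 + t)) t := by
    simpa using ((hasDerivAt_id' t).const_add 1).log ht
  have hsum := HasDerivAt.fun_sum (u := range n) fun k _ =>
    (hu.pow (k + 1)).div_const ((k : ℝ) + 1)
  refine (hlog.fun_sub hsum).congr_deriv ?_
  have hu1 : t / (1 + t) - 1 = -(1 / (1 + t)) := by field_simp; ring
  have hcancel : ∀ k : ℕ,
      ((k + 1 : ℕ) : ℝ) * (t / (1 + t)) ^ (k + 1 - 1) * (1 / (1 + t) ^ 2) / (k + 1) =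
        (t / (1 + t)) ^ k * (1 / (1 + t) ^ 2) := fun k => by
    push_cast; field_simp
  have hne : t / (1 + t) ≠ 1 := sub_ne_zero.1 (by rw [hu1]; simpa using ht)
  rw [sum_congr rfl fun k _ => hcancel k, ← sum_mul, geom_sum_eq hne, hu1, div_pow]
  field_simp
  ring

theorem tendsto_logTail_sub_log (n : ℕ) :
    Tendsto (fun t => logTail n t - Real.log t) atTop
      (nhds (-∑ k ∈ range n, 1 / ((k : ℝ) + 1))) := by
  have hu : Tendsto (fun t : ℝ => t / (1 + t)) atTop (nhds 1) := by
    have h1 := (tendsto_inv_atTop_zero.comp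
      (tendsto_atTop_add_const_left atTop (1 : ℝ) tendsto_id)).const_sub (1 : ℝ)
    rw [sub_zero] at h1
    refine h1.congr' ?_
    filter_upwards [eventually_gt_atTop 0] with t ht
    simp only [Function.comp_apply, id]
    field_simp
    ring
  have hlog : Tendsto (fun t : ℝ => Real.log (1 + t) - Real.log t) atTop (nhds 0) := by
    have h1 := (tendsto_inv_atTop_zero (𝕜 := ℝ)).const_add 1
    rw [add_zero] at h1
    have h2 := (Real.continuousAt_log one_ne_zero).tendsto.comp h1
    rw [Real.log_one] at h2
    refine h2.congr' ?_
    filter_upwards [eventually_gt_atTop 0] with t ht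
    rw [Function.comp_apply, ← Real.log_div (by positivity) ht.ne']
    congr 1
    field_simp
    ring
  have hsum := tendsto_finsetSum (range n) fun k _ =>
    (hu.pow (k + 1)).div_const ((k : ℝ) + 1)
  simp only [one_pow] at hsum
  convert hlog.sub hsum using 1
  · ext t; unfold logTail; ring
  · simp

theorem integral_rpow_div_one_add_rpow_pow (n : ℕ) {p r : ℝ} (hp : 0 < p) (hr : 0 ≤ r) :
    ∫ ρ in (0 : ℝ)..r, ρ ^ n * (ρ ^ (p - 1) / (1 + ρ ^ p)) ^ (n + 1) =
      logTail n (r ^ p) / p := by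
  have hF : ∀ ρ : ℝ, 0 < ρ → HasDerivAt (fun ρ : ℝ => logTail n (ρ ^ p) / p)
      (ρ ^ n * (ρ ^ (p - 1) / (1 + ρ ^ p)) ^ (n + 1)) ρ := fun ρ hρ => by
    have hρp : 0 < ρ ^ p := Real.rpow_pos_of_pos hρ p
    refine (((hasDerivAt_logTail n (by positivity)).comp ρ
      (Real.hasDerivAt_rpow_const (Or.inl hρ.ne'))).div_const p).congr_deriv ?_
    rw [Real.rpow_sub_one hρ.ne']
    simp only [div_pow]
    field_simp
    ring
  have hcont : ContinuousOn (fun ρ : ℝ => logTail n (ρ ^ p) / p) (Set.Icc 0 r) := fun ρ hρ =>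
    (((hasDerivAt_logTail n (by have := Real.rpow_nonneg hρ.1 p; positivity)).continuousAt.comp
      (Real.continuousAt_rpow_const ρ p (Or.inr hp.le))).div_const p).continuousWithinAt
  -- A nonnegative derivative is integrable on its own; for `p < 1` the integrand is unbounded at 0.
  have hnonneg : ∀ ρ ∈ Set.Ioo 0 r, 0 ≤ ρ ^ n * (ρ ^ (p - 1) / (1 + ρ ^ p)) ^ (n + 1) :=
    fun ρ hρ => by have := hρ.1; positivity
  rw [intervalIntegral.integral_eq_sub_of_hasDerivAt_of_le hr hcont (fun ρ hρ => hF ρ hρ.1)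
    ((intervalIntegrable_iff_integrableOn_Ioc_of_le hr).2
      (intervalIntegral.integrableOn_deriv_of_nonneg hcont (fun ρ hρ => hF ρ hρ.1) hnonneg))]
  simp [logTail, Real.zero_rpow hp.ne']

theorem integral_ball_fun_norm {E : Type*} [NormedAddCommGroup E] [NormedSpace ℝ E]
    [Nontrivial E] [FiniteDimensional ℝ E] [MeasurableSpace E] [BorelSpace E] (μ : Measure E)
    [μ.IsAddHaarMeasure] (g : ℝ → ℝ) {r : ℝ} (hr : 0 ≤ r) :
    ∫ x in Metric.ball (0 : E) r, g ‖x‖ ∂μ =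
      Module.finrank ℝ E * μ.real (Metric.ball 0 1) *
      ∫ ρ in (0 : ℝ)..r, ρ ^ (Module.finrank ℝ E - 1) * g ρ := by
  have hind : (Metric.ball (0 : E) r).indicator (fun x => g ‖x‖) =
      fun x => (Set.Iio r).indicator g ‖x‖ := by
    ext x
    by_cases h : ‖x‖ < r <;> simp [Set.indicator, h]
  have hind' : ∀ ρ : ℝ, ρ ^ (Module.finrank ℝ E - 1) * (Set.Iio r).indicator g ρ =
      (Set.Iio r).indicator (fun ρ => ρ ^ (Module.finrank ℝ E - 1) * g ρ) ρ := fun ρ => by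
    by_cases h : ρ ∈ Set.Iio r <;> simp [h]
  rw [← integral_indicator measurableSet_ball, hind, integral_fun_norm_addHaar μ]
  simp only [nsmul_eq_mul, smul_eq_mul, hind']
  rw [setIntegral_indicator measurableSet_Iio, Set.Ioi_inter_Iio,
    intervalIntegral.integral_of_le hr, integral_Ioc_eq_integral_Ioo, mul_assoc]

theorem norm_gradient_comp_norm {E : Type*} [NormedAddCommGroup E] [InnerProductSpace ℝ E]
    [CompleteSpace E] {f : ℝ → ℝ} {f' : ℝ} {x : E} (hx : x ≠ 0)
    (hf : HasDerivAt f f' ‖x‖) :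
    ‖gradient (fun y => f ‖y‖) x‖ = |f'| := by
  have : Nontrivial E := ⟨⟨x, 0, hx⟩⟩
  have hnorm : HasFDerivAt (‖·‖) (fderiv ℝ (‖·‖) x) x :=
    ((contDiffAt_norm ℝ (n := 1) hx).differentiableAt one_ne_zero).hasFDerivAt
  have hcomp : HasFDerivAt (fun y => f ‖y‖) (f' • fderiv ℝ (‖·‖) x) x :=
    hf.comp_hasFDerivAt x hnorm
  rw [gradient, LinearIsometryEquiv.norm_map, hcomp.fderiv, norm_smul,
    norm_fderiv_norm hnorm.differentiableAt, mul_one, Real.norm_eq_abs]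

theorem hasDerivAt_neg_log_mul_one_add_rpow_pow (n : ℕ) {V p ρ : ℝ} (hV : V ≠ 0)
    (hρ : 0 < ρ) :
    HasDerivAt (fun ρ : ℝ => -Real.log (V * (1 + ρ ^ p) ^ n))
      (-(n * p * ρ ^ (p - 1) / (1 + ρ ^ p))) ρ := by
  have hρp : 1 + ρ ^ p ≠ 0 := by have := Real.rpow_pos_of_pos hρ p; positivity
  refine ((((Real.hasDerivAt_rpow_const (Or.inl hρ.ne')).const_add 1).fun_pow n).const_mul V
    |>.log (mul_ne_zero hV (pow_ne_zero n hρp)) |>.neg).congr_deriv ?_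
  rcases n with _ | n
  · simp
  · rw [Nat.add_sub_cancel, pow_succ]
    field_simp

theorem integral_ball_norm_gradient_pow {E : Type*} [NormedAddCommGroup E]
    [InnerProductSpace ℝ E] [FiniteDimensional ℝ E] [Nontrivial E] [MeasurableSpace E]
    [BorelSpace E] (μ : Measure E) [μ.IsAddHaarMeasure] {d : ℕ} (hd : Module.finrank ℝ E = d)
    {V p r : ℝ} (hV : V ≠ 0) (hp : 0 < p) (hr : 0 ≤ r) :
    ∫ x in Metric.ball (0 : E) r,
        ‖gradient (fun x => -Real.log (V * (1 + ‖x‖ ^ p) ^ d)) x‖ ^ d ∂μ =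
      d * μ.real (Metric.ball 0 1) * (d * p) ^ d * logTail (d - 1) (r ^ p) / p := by
  have hnorm_grad : ∀ x : E, x ≠ 0 →
      ‖gradient (fun x => -Real.log (V * (1 + ‖x‖ ^ p) ^ d)) x‖ =
        d * p * (‖x‖ ^ (p - 1) / (1 + ‖x‖ ^ p)) := fun x hx => by
    rw [norm_gradient_comp_norm hx
      (hasDerivAt_neg_log_mul_one_add_rpow_pow d hV (norm_pos_iff.2 hx)), abs_neg, abs_of_nonneg
      (by positivity), mul_div_assoc]
  obtain ⟨n, rfl⟩ : ∃ n, d = n + 1 :=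
    Nat.exists_eq_succ_of_ne_zero (hd ▸ Module.finrank_pos.ne')
  set c : ℝ := ((n + 1 : ℕ) : ℝ) * p
  calc
    _ = ∫ x in Metric.ball (0 : E) r,
          (c * (‖x‖ ^ (p - 1) / (1 + ‖x‖ ^ p))) ^ (n + 1) ∂μ := by
        refine setIntegral_congr_ae measurableSet_ball ?_
        filter_upwards [compl_mem_ae_iff.2 (measure_singleton (0 : E))] with x hx _
        rw [hnorm_grad x hx]
    _ = _ := by
      rw [integral_ball_fun_norm μ (fun ρ => (c * (ρ ^ (p - 1) / (1 + ρ ^ p))) ^ (n + 1)) hr,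
        hd]
      simp only [mul_pow c, add_tsub_cancel_right, mul_left_comm _ (c ^ (n + 1)),
        intervalIntegral.integral_const_mul, integral_rpow_div_one_add_rpow_pow n hp hr]
      ring

/-- For `N ≥ 2`, `v_N(x) = -ln(V_N (1+|x|^(N/(N-1)))^N)` and
`ω̃_N = N^N (N/(N-1))^(N-1) ω_{N-1}` (with `ω_{N-1} = N V_N` the surface measure of the
unit sphere), one has
`(1/ω̃_N) ∫_{B_r} |∇v_N|^N dx - (N/(N-1)) ln r → -Σ_{k=1}^{N-1} 1/k` as `r → ∞`. -/
theorem stmt13 (N : ℕ) (hN : 2 ≤ N) (V ω : ℝ)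
    (hV : V = (volume (Metric.ball (0 : EuclideanSpace ℝ (Fin N)) 1)).toReal)
    (hω : ω = N * V)
    (v : EuclideanSpace ℝ (Fin N) → ℝ)
    (hv : ∀ x, v x = -Real.log (V * (1 + ‖x‖ ^ ((N : ℝ) / ((N : ℝ) - 1))) ^ N)) :
    Tendsto (fun r : ℝ =>
        (1 / ((N : ℝ) ^ N * ((N : ℝ) / ((N : ℝ) - 1)) ^ (N - 1) * ω)) *
          (∫ x in Metric.ball (0 : EuclideanSpace ℝ (Fin N)) r, ‖gradient v x‖ ^ N) -
        ((N : ℝ) / ((N : ℝ) - 1)) * Real.log r)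
      atTop (nhds (-∑ k ∈ Finset.range (N - 1), 1 / ((k : ℝ) + 1))) := by
  set p : ℝ := (N : ℝ) / ((N : ℝ) - 1)
  have hp : 0 < p := div_pos (by positivity) (by rw [sub_pos]; exact_mod_cast hN)
  have : Nonempty (Fin N) := ⟨⟨0, by omega⟩⟩
  have hV0 : V ≠ 0 := hV ▸
    (ENNReal.toReal_pos (Metric.measure_ball_pos volume _ one_pos).ne' measure_ball_lt_top.ne).ne'
  obtain rfl : v = fun x => -Real.log (V * (1 + ‖x‖ ^ p) ^ N) := funext hv
  refine ((tendsto_logTail_sub_log (N - 1)).comp (tendsto_rpow_atTop hp)).congr' ?_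
  filter_upwards [eventually_gt_atTop 0] with r hr
  rw [Function.comp_apply,
    integral_ball_norm_gradient_pow volume finrank_euclideanSpace_fin hV0 hp hr.le,
    measureReal_def, ← hV, hω, Real.log_rpow hr, mul_pow, ← pow_sub_one_mul (by omega : N ≠ 0) p]
  field_simp
end

section
/- Let Ω be a bounded domain of ℝ^N, let r > 1, and let u, v : Ω → ℝ be differentiable with u ≥ 0 and v > 0 (Picone's identity and inequality): defining L_r(u,v) = |∇u|^r + (r-1)(u/v)^r |∇v|^r - r (u/v)^(r-1) |∇v|^(r-2) ∇v · ∇u and R_r(u,v) = |∇u|^r - |∇v|^(r-2) ∇v · ∇(u^r / v^(r-1)), one has L_r(u,v) = R_r(u,v) at every point, and L_r(u,v) ≥ 0. -/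
/-!
Write `t = u/v`. By the chain rule `∇(u^r/v^(r-1)) = r t^(r-1) ∇u - (r-1) t^r ∇v`, and substituting
this into `R_r` gives `L_r`, because `|∇v|^(r-2) |∇v|^2 = |∇v|^r`. For the sign, Cauchy–Schwarz
bounds the cross term of `L_r` by `r |∇u| (t |∇v|)^(r-1)`, and Young's inequality with exponents
`r` and `r/(r-1)` bounds this by `|∇u|^r + (r-1) (t |∇v|)^r`.
-/

open scoped RealInnerProductSpace

theorem Real.mul_mul_rpow_sub_one_le {r x y : ℝ} (hr : 1 < r) (hx : 0 ≤ x) (hy : 0 ≤ y) :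
    r * (x * y ^ (r - 1)) ≤ x ^ r + (r - 1) * y ^ r := by
  have hconj : r.HolderConjugate (r / (r - 1)) := .conjExponent hr
  have hyoung := Real.young_inequality_of_nonneg hx (Real.rpow_nonneg hy (r - 1)) hconj
  rw [← Real.rpow_mul hy, hconj.sub_one_mul_conj] at hyoung
  calc r * (x * y ^ (r - 1)) ≤ r * (x ^ r / r + y ^ r / (r / (r - 1))) := by gcongr
    _ = x ^ r + (r - 1) * y ^ r := by field_simp

section Picone

variable {E : Type*} [NormedAddCommGroup E] [InnerProductSpace ℝ E]

/-- `L_r(u,v)` at a point where `u / v = t`, `∇u = a` and `∇v = b`. -/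
noncomputable def piconeL (r t : ℝ) (a b : E) : ℝ :=
  ‖a‖ ^ r + (r - 1) * t ^ r * ‖b‖ ^ r - r * t ^ (r - 1) * ‖b‖ ^ (r - 2) * ⟪b, a⟫

/-- `R_r(u,v)` at a point where `∇u = a`, `∇v = b` and `∇(u^r / v^(r-1)) = g`. -/
noncomputable def piconeR (r : ℝ) (a b g : E) : ℝ :=
  ‖a‖ ^ r - ‖b‖ ^ (r - 2) * ⟪b, g⟫

theorem piconeL_eq_piconeR {r : ℝ} (hr : r ≠ 0) (t : ℝ) (a b : E) :
    piconeL r t a b = piconeR r a b ((r * t ^ (r - 1)) • a - ((r - 1) * t ^ r) • b) := by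
  have hb : ‖b‖ ^ (r - 2) * ‖b‖ ^ 2 = ‖b‖ ^ r := by
    rw [← Real.rpow_two, ← Real.rpow_add' (norm_nonneg b) (by simpa using hr), sub_add_cancel]
  rw [piconeL, piconeR, inner_sub_right, real_inner_smul_right, real_inner_smul_right,
    real_inner_self_eq_norm_sq]
  linear_combination (-(r - 1) * t ^ r) * hb

theorem piconeL_nonneg {r t : ℝ} (hr : 1 < r) (ht : 0 ≤ t) (a b : E) : 0 ≤ piconeL r t a b := by
  have hb : ‖b‖ ^ (r - 2) * ‖b‖ = ‖b‖ ^ (r - 1) := by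
    rw [← Real.rpow_add_one' (norm_nonneg b) (by linarith)]
    ring_nf
  have key : r * t ^ (r - 1) * ‖b‖ ^ (r - 2) * ⟪b, a⟫ ≤ ‖a‖ ^ r + (r - 1) * t ^ r * ‖b‖ ^ r :=
    calc r * t ^ (r - 1) * ‖b‖ ^ (r - 2) * ⟪b, a⟫
        ≤ r * t ^ (r - 1) * ‖b‖ ^ (r - 2) * (‖b‖ * ‖a‖) := by
          gcongr
          exact real_inner_le_norm b a
      _ = r * (‖a‖ * (t * ‖b‖) ^ (r - 1)) := by
          rw [Real.mul_rpow ht (norm_nonneg b), ← hb]; ring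
      _ ≤ ‖a‖ ^ r + (r - 1) * (t * ‖b‖) ^ r :=
          Real.mul_mul_rpow_sub_one_le hr (norm_nonneg a) (by positivity)
      _ = ‖a‖ ^ r + (r - 1) * t ^ r * ‖b‖ ^ r := by rw [Real.mul_rpow ht (norm_nonneg b)]; ring
  rw [piconeL]
  linarith

theorem HasGradientAt.rpow_div_rpow_sub_one [CompleteSpace E] {u v : E → ℝ} {a b x : E} {r : ℝ}
    (hu : HasGradientAt u a x) (hv : HasGradientAt v b x) (hux : 0 ≤ u x) (hvx : 0 < v x)
    (hr : 1 ≤ r) :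
    HasGradientAt (fun y => u y ^ r / v y ^ (r - 1))
      ((r * (u x / v x) ^ (r - 1)) • a - ((r - 1) * (u x / v x) ^ r) • b) x := by
  have hur := hu.hasFDerivAt.rpow_const (p := r) (Or.inr hr)
  have hvr := hv.hasFDerivAt.rpow_const (p := -(r - 1)) (Or.inl hvx.ne')
  -- `v ^ (-(r - 1)) = (v ^ (r - 1))⁻¹` only where `v ≥ 0`
  have hquot : (fun y => u y ^ r * v y ^ (-(r - 1))) =ᶠ[nhds x]
      (fun y => u y ^ r / v y ^ (r - 1)) := by
    filter_upwards [hv.continuousAt.eventually (lt_mem_nhds hvx)] with y hy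
    rw [Real.rpow_neg hy.le, div_eq_mul_inv]
  rw [hasGradientAt_iff_hasFDerivAt]
  refine ((hur.mul hvr).congr_of_eventuallyEq hquot.symm).congr_fderiv ?_
  have hcoeff_a : v x ^ (-(r - 1)) * (r * u x ^ (r - 1)) = r * (u x / v x) ^ (r - 1) := by
    rw [Real.div_rpow hux hvx.le, Real.rpow_neg hvx.le]
    field_simp
  have hcoeff_b : u x ^ r * (-(r - 1) * v x ^ (-(r - 1) - 1)) = -((r - 1) * (u x / v x) ^ r) := by
    rw [Real.div_rpow hux hvx.le, show -(r - 1) - 1 = -r by ring, Real.rpow_neg hvx.le]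
    field_simp
  rw [smul_smul, smul_smul, hcoeff_a, hcoeff_b, neg_smul, map_sub, map_smul, map_smul]
  abel

end Picone

theorem stmt16_general (N : ℕ) (r : ℝ) (hr : 1 < r)
    (Ω : Set (EuclideanSpace ℝ (Fin N))) (hΩo : IsOpen Ω)
    (u v : EuclideanSpace ℝ (Fin N) → ℝ)
    (hud : DifferentiableOn ℝ u Ω) (hvd : DifferentiableOn ℝ v Ω)
    (hu0 : ∀ x ∈ Ω, 0 ≤ u x) (hv0 : ∀ x ∈ Ω, 0 < v x)
    (x : EuclideanSpace ℝ (Fin N)) (hx : x ∈ Ω) :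
    ‖gradient u x‖ ^ r + (r - 1) * (u x / v x) ^ r * ‖gradient v x‖ ^ r -
        r * (u x / v x) ^ (r - 1) * ‖gradient v x‖ ^ (r - 2) *
          ⟪gradient v x, gradient u x⟫ =
      ‖gradient u x‖ ^ r - ‖gradient v x‖ ^ (r - 2) *
        ⟪gradient v x, gradient (fun y => u y ^ r / v y ^ (r - 1)) x⟫ ∧
    0 ≤ ‖gradient u x‖ ^ r + (r - 1) * (u x / v x) ^ r * ‖gradient v x‖ ^ r -
        r * (u x / v x) ^ (r - 1) * ‖gradient v x‖ ^ (r - 2) *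
          ⟪gradient v x, gradient u x⟫ := by
  have hux := hu0 x hx
  have hvx := hv0 x hx
  have hu : HasGradientAt u (gradient u x) x :=
    (hud.differentiableAt (hΩo.mem_nhds hx)).hasGradientAt
  have hv : HasGradientAt v (gradient v x) x :=
    (hvd.differentiableAt (hΩo.mem_nhds hx)).hasGradientAt
  refine ⟨?_, piconeL_nonneg hr (div_nonneg hux hvx.le) _ _⟩
  rw [(hu.rpow_div_rpow_sub_one hv hux hvx hr.le).gradient]
  exact piconeL_eq_piconeR (zero_lt_one.trans hr).ne' _ _ _

/-- Picone's identity and inequality: for `r > 1`, `u ≥ 0` and `v > 0` differentiable on a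
bounded domain `Ω`, with
`L_r(u,v) = |∇u|^r + (r-1)(u/v)^r |∇v|^r - r (u/v)^(r-1) |∇v|^(r-2) ∇v ⬝ ∇u` and
`R_r(u,v) = |∇u|^r - |∇v|^(r-2) ∇v ⬝ ∇(u^r/v^(r-1))`, one has `L_r(u,v) = R_r(u,v)`
at every point of `Ω`, and `L_r(u,v) ≥ 0`. -/
theorem stmt16 (N : ℕ) (r : ℝ) (hr : 1 < r)
    (Ω : Set (EuclideanSpace ℝ (Fin N))) (hΩo : IsOpen Ω) (hΩb : Bornology.IsBounded Ω)
    (u v : EuclideanSpace ℝ (Fin N) → ℝ)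
    (hud : DifferentiableOn ℝ u Ω) (hvd : DifferentiableOn ℝ v Ω)
    (hu0 : ∀ x ∈ Ω, 0 ≤ u x) (hv0 : ∀ x ∈ Ω, 0 < v x)
    (x : EuclideanSpace ℝ (Fin N)) (hx : x ∈ Ω) :
    ‖gradient u x‖ ^ r + (r - 1) * (u x / v x) ^ r * ‖gradient v x‖ ^ r -
        r * (u x / v x) ^ (r - 1) * ‖gradient v x‖ ^ (r - 2) *
          ⟪gradient v x, gradient u x⟫ =
      ‖gradient u x‖ ^ r - ‖gradient v x‖ ^ (r - 2) *
        ⟪gradient v x, gradient (fun y => u y ^ r / v y ^ (r - 1)) x⟫ ∧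
    0 ≤ ‖gradient u x‖ ^ r + (r - 1) * (u x / v x) ^ r * ‖gradient v x‖ ^ r -
        r * (u x / v x) ^ (r - 1) * ‖gradient v x‖ ^ (r - 2) *
          ⟪gradient v x, gradient u x⟫ :=
  stmt16_general N r hr Ω hΩo u v hud hvd hu0 hv0 x hx
end

section
/- Let N ≥ 2 and let ω̃_N = N^N (N/(N-1))^(N-1) ω_{N-1} where ω_{N-1} is the surface measure of the unit sphere in ℝ^N. Let Ω ⊂ ℝ^N be a bounded domain, u ∈ W₀^{1,N}(Ω) with ∇u ≠ 0 in L^N, and suppose the Moser–Trudinger bound (1/|Ω|) ∫_Ω exp(α_N (|u|/‖∇u‖_N)^{N/(N-1)}) dx ≤ C_N holds, with α_N = N ω_{N-1}^{1/(N-1)}. Then ln( (1/|Ω|) ∫_Ω e^u dx ) ≤ (1/ω̃_N) ∫_Ω |∇u|^N dx + ln C_N. -/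
open MeasureTheory

/-- The logarithmic Moser–Trudinger inequality on a bounded domain `Ω ⊂ ℝ^N` follows from
the Moser–Trudinger bound: if `u ∈ W₀^{1,N}(Ω)` with `‖∇u‖_N ≠ 0` and
`(1/|Ω|) ∫_Ω exp(α_N (|u|/‖∇u‖_N)^{N/(N-1)}) ≤ C_N`, where `α_N = N ω_{N-1}^{1/(N-1)}`,
then `ln((1/|Ω|) ∫_Ω e^u) ≤ (1/ω̃_N) ∫_Ω |∇u|^N + ln C_N`, where
`ω̃_N = N^N (N/(N-1))^(N-1) ω_{N-1}`. -/
theorem stmt18 (N : ℕ) (hN : 2 ≤ N)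
    (Ω : Set (EuclideanSpace ℝ (Fin N))) (hΩo : IsOpen Ω)
    (hΩb : Bornology.IsBounded Ω) (hΩne : Ω.Nonempty)
    (u : EuclideanSpace ℝ (Fin N) → ℝ)
    (hud : Differentiable ℝ u) (hu0 : ∀ x ∉ Ω, u x = 0)
    (huN : Integrable (fun x => |u x| ^ N) (volume.restrict Ω))
    (hgN : Integrable (fun x => ‖gradient u x‖ ^ N) (volume.restrict Ω))
    (ω C G α : ℝ)
    (hω : ω = N * (volume (Metric.ball (0 : EuclideanSpace ℝ (Fin N)) 1)).toReal)
    (hG : G = (∫ x in Ω, ‖gradient u x‖ ^ N) ^ (1 / (N : ℝ)))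
    (hGne : G ≠ 0)
    (hα : α = N * ω ^ (1 / ((N : ℝ) - 1)))
    (hC : 1 < C)
    (hMTint : Integrable
      (fun x => Real.exp (α * (|u x| / G) ^ ((N : ℝ) / ((N : ℝ) - 1))))
      (volume.restrict Ω))
    (hMT : (1 / (volume Ω).toReal) *
        ∫ x in Ω, Real.exp (α * (|u x| / G) ^ ((N : ℝ) / ((N : ℝ) - 1))) ≤ C) :
    Real.log ((1 / (volume Ω).toReal) * ∫ x in Ω, Real.exp (u x)) ≤
      (1 / ((N : ℝ) ^ N * ((N : ℝ) / ((N : ℝ) - 1)) ^ (N - 1) * ω)) *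
        (∫ x in Ω, ‖gradient u x‖ ^ N) + Real.log C := by
  classical
  set n : ℝ := (N : ℝ) with hn_def
  have hn2 : (2 : ℝ) ≤ n := by rw [hn_def]; exact_mod_cast hN
  have hn1 : 1 < n := by linarith
  have hn0 : 0 < n := by linarith
  have hn1' : 0 < n - 1 := by linarith
  have hpq : Real.HolderConjugate n (n / (n - 1)) := Real.HolderConjugate.conjExponent hn1
  set q : ℝ := n / (n - 1) with hq_def
  have hq0 : 0 < q := div_pos hn0 hn1'
  -- positivity of ω, α
  have hω0 : 0 < ω := by
    rw [hω]
    have h1 : 0 < volume (Metric.ball (0 : EuclideanSpace ℝ (Fin N)) 1) :=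
      Metric.measure_ball_pos volume _ one_pos
    have h2 : volume (Metric.ball (0 : EuclideanSpace ℝ (Fin N)) 1) < ⊤ :=
      Metric.isBounded_ball.measure_lt_top
    have h3 : 0 < (volume (Metric.ball (0 : EuclideanSpace ℝ (Fin N)) 1)).toReal :=
      ENNReal.toReal_pos h1.ne' h2.ne
    positivity
  have hα0 : 0 < α := by
    rw [hα]
    have : (0:ℝ) < ω ^ (1 / (n - 1)) := Real.rpow_pos_of_pos hω0 _
    positivity
  -- the integral I and its relation to G
  set I : ℝ := ∫ x in Ω, ‖gradient u x‖ ^ N with hI_def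
  have hI0 : 0 ≤ I := integral_nonneg fun x => by positivity
  have hIpos : 0 < I := by
    rcases hI0.eq_or_lt with h | h
    · exfalso; apply hGne
      rw [hG, ← h, Real.zero_rpow (one_div_ne_zero hn0.ne')]
    · exact h
  have hG0 : 0 < G := by
    rw [hG]; exact Real.rpow_pos_of_pos hIpos _
  have hGn : G ^ n = I := by
    rw [hG, ← Real.rpow_mul hI0, one_div, inv_mul_cancel₀ hn0.ne', Real.rpow_one]
  -- the constant ω̃
  set W : ℝ := (N : ℝ) ^ N * ((N : ℝ) / ((N : ℝ) - 1)) ^ (N - 1) * ω with hW_def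
  have hNm1 : ((N - 1 : ℕ) : ℝ) = n - 1 := by
    push_cast [Nat.cast_sub (by omega : 1 ≤ N)]; ring
  -- α ^ (n-1) = n^(n-1) * ω
  have hαpow : α ^ (n - 1) = n ^ (n - 1) * ω := by
    rw [hα, Real.mul_rpow hn0.le (Real.rpow_nonneg hω0.le _), ← Real.rpow_mul hω0.le,
      one_div, inv_mul_cancel₀ hn1'.ne', Real.rpow_one]
  have hW_alt : W = n * (n * α / (n - 1)) ^ (n - 1) := by
    have h1 : n * α / (n - 1) = (n / (n - 1)) * α := by ring
    rw [h1, Real.mul_rpow (by positivity) hα0.le, hαpow, hW_def]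
    rw [← Real.rpow_natCast (n / (n-1)) (N-1), ← Real.rpow_natCast n N, hNm1]
    have : (N : ℝ) = n := rfl
    rw [this]
    have h2 : n ^ (n : ℝ) = n * n ^ (n - 1) := by
      rw [← Real.rpow_one_add' hn0.le (by linarith : (1:ℝ) + (n-1) ≠ 0)]
      ring_nf
    rw [h2]; ring
  have hW0 : 0 < W := by
    rw [hW_alt]
    have : (0:ℝ) < (n * α / (n - 1)) ^ (n - 1) := Real.rpow_pos_of_pos (by positivity) _
    positivity
  -- the Young auxiliary constant a
  set a : ℝ := G * ((n - 1) / (n * α)) ^ ((n - 1) / n) with ha_def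
  have ha0 : 0 < a := by
    have : (0:ℝ) < ((n - 1) / (n * α)) ^ ((n - 1) / n) :=
      Real.rpow_pos_of_pos (by positivity) _
    positivity
  -- Claim A : a ^ n / n = I / W
  have hA : a ^ n / n = I / W := by
    rw [ha_def, Real.mul_rpow hG0.le (Real.rpow_nonneg (by positivity) _), hGn,
      ← Real.rpow_mul (by positivity), div_mul_cancel₀ _ hn0.ne', hW_alt]
    rw [Real.div_rpow hn1'.le (by positivity), Real.div_rpow (by positivity) hn1'.le]
    field_simp
  -- Claim B : for t ≥ 0, t ^ q / q = ... ; we show (t/a)^q / q = α * (t/G)^q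
  have hB : ∀ t : ℝ, 0 ≤ t → (t / a) ^ q / q = α * (t / G) ^ q := by
    intro t ht
    have haq : a ^ q = G ^ q * ((n - 1) / (n * α)) := by
      rw [ha_def, Real.mul_rpow hG0.le (Real.rpow_nonneg (by positivity) _),
        ← Real.rpow_mul (by positivity)]
      rw [hq_def, div_mul_div_comm, mul_comm (n-1) n, div_self (by positivity), Real.rpow_one]
    rw [Real.div_rpow ht ha0.le, Real.div_rpow ht hG0.le, haq, hq_def]
    have hGq : (0:ℝ) < G ^ q := Real.rpow_pos_of_pos hG0 _
    rw [hq_def] at hGq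
    field_simp
  -- pointwise bound : u x ≤ I / W + α * (|u x| / G) ^ q
  have hpt : ∀ x, u x ≤ I / W + α * (|u x| / G) ^ q := by
    intro x
    have ht : 0 ≤ |u x| := abs_nonneg _
    have h1 : u x ≤ a * (|u x| / a) := by
      rw [mul_div_cancel₀ _ ha0.ne']
      exact le_abs_self _
    have h2 := Real.young_inequality_of_nonneg ha0.le (by positivity : 0 ≤ |u x| / a) hpq
    calc u x ≤ a * (|u x| / a) := h1
      _ ≤ a ^ n / n + (|u x| / a) ^ q / q := h2
      _ = I / W + α * (|u x| / G) ^ q := by rw [hA, hB _ ht]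
  -- integrability of exp ∘ u
  set K : ℝ := I / W with hK_def
  have hKexp : ∀ x, Real.exp (u x) ≤ Real.exp K * Real.exp (α * (|u x| / G) ^ q) := by
    intro x
    rw [← Real.exp_add]
    exact Real.exp_le_exp.mpr (hpt x)
  have hexp_int : Integrable (fun x => Real.exp (u x)) (volume.restrict Ω) := by
    refine Integrable.mono' (hMTint.const_mul (Real.exp K)) ?_ ?_
    · exact (Real.continuous_exp.comp hud.continuous).aestronglyMeasurable
    · filter_upwards with x
      rw [Real.norm_eq_abs, Real.abs_exp]
      exact hKexp x
  have hVpos : 0 < (volume Ω).toReal :=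
    ENNReal.toReal_pos (hΩo.measure_pos volume hΩne).ne' hΩb.measure_lt_top.ne
  -- integral comparison
  have hint_le : (∫ x in Ω, Real.exp (u x)) ≤
      Real.exp K * ∫ x in Ω, Real.exp (α * (|u x| / G) ^ q) := by
    rw [← integral_const_mul]
    exact integral_mono hexp_int (hMTint.const_mul _) hKexp
  have hIntPos : 0 < ∫ x in Ω, Real.exp (u x) := by
    rw [integral_pos_iff_support_of_nonneg (fun x => (Real.exp_pos _).le) hexp_int]
    have : (Function.support fun x => Real.exp (u x)) = Set.univ := by
      ext x; simp [Function.mem_support, (Real.exp_pos (u x)).ne']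
    rw [this, Measure.restrict_apply_univ]
    exact (hΩo.measure_pos volume hΩne)
  have hLpos : 0 < (1 / (volume Ω).toReal) * ∫ x in Ω, Real.exp (u x) := by positivity
  have hchain : (1 / (volume Ω).toReal) * ∫ x in Ω, Real.exp (u x) ≤ Real.exp K * C := by
    calc (1 / (volume Ω).toReal) * ∫ x in Ω, Real.exp (u x)
        ≤ (1 / (volume Ω).toReal) * (Real.exp K * ∫ x in Ω, Real.exp (α * (|u x| / G) ^ q)) :=
          mul_le_mul_of_nonneg_left hint_le (by positivity)
      _ = Real.exp K * ((1 / (volume Ω).toReal) * ∫ x in Ω, Real.exp (α * (|u x| / G) ^ q)) := by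
          ring
      _ ≤ Real.exp K * C := mul_le_mul_of_nonneg_left hMT (Real.exp_pos _).le
  have hfinal : Real.log ((1 / (volume Ω).toReal) * ∫ x in Ω, Real.exp (u x)) ≤ K + Real.log C := by
    calc Real.log ((1 / (volume Ω).toReal) * ∫ x in Ω, Real.exp (u x))
        ≤ Real.log (Real.exp K * C) := (Real.log_le_log_iff hLpos (by positivity)).mpr hchain
      _ = K + Real.log C := by
          rw [Real.log_mul (Real.exp_ne_zero _) (by linarith), Real.log_exp]
  have hform : K = (1 / W) * I := by rw [hK_def]; ring
  rw [hform] at hfinal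
  exact hfinal
end
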